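/- For all 0 ≤ k ≤ n, the iterated q-derivative in y satisfies D_{q,y}^k P_{n,q}^{(α)}(x,y;u) = ([n]_q!/[n-k]_q!) u^{C(k,2)} P_{n-k,q}^{(α)}(x, u^k y; u). -/
import Mathlib


open Finset

def qNum {K : Type*} [Field K] (q : K) (n : ℕ) : K := ∑ i ∈ Finset.range n, q ^ i

def qFact {K : Type*} [Field K] (q : K) : ℕ → K
  | 0 => 1
  | n + 1 => qFact q n * qNum q (n + 1)

def qBinom {K : Type*} [Field K] (q : K) (n k : ℕ) : K :=
  qFact q n / (qFact q k * qFact q (n - k))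

/-- The q-derivative operator on functions K → K. -/
def Dq {K : Type*} [Field K] (q : K) (f : K → K) : K → K :=
  fun x => (f x - f (q * x)) / ((1 - q) * x)

/-- The deformed bivariate q-Appell polynomial, as a polynomial function of x and y. -/
def Pb {K : Type*} [Field K] (q u : K) (a : ℕ → K) (n : ℕ) (x y : K) : K :=
  ∑ j ∈ Finset.range (n + 1), qBinom q n j * u ^ ((n - j).choose 2) *
    (∑ i ∈ Finset.range (j + 1), qBinom q j i * a i * x ^ (j - i)) * y ^ (n - j)

lemma qFact_ne {K : Type*} [Field K] {q : K} (hq : ∀ n : ℕ, 0 < n → qNum q n ≠ 0) :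
    ∀ m, qFact q m ≠ 0 := by
  intro m
  induction m with
  | zero => simp [qFact]
  | succ s ih => exact mul_ne_zero ih (hq (s+1) (Nat.succ_pos s))

lemma one_sub_pow {K : Type*} [Field K] (q : K) (d : ℕ) :
    1 - q ^ d = (1 - q) * qNum q d := by
  have := geom_sum_mul q d
  unfold qNum
  linear_combination this

lemma qBinom_identity {K : Type*} [Field K] {q : K} (hq : ∀ n : ℕ, 0 < n → qNum q n ≠ 0)
    (s j : ℕ) (hj : j ≤ s) :
    qBinom q (s+1) j * qNum q (s+1-j) = qNum q (s+1) * qBinom q s j := by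
  have h1 : s + 1 - j = (s - j) + 1 := by omega
  unfold qBinom
  rw [h1, show qFact q (s+1) = qFact q s * qNum q (s+1) from rfl,
    show qFact q ((s-j)+1) = qFact q (s-j) * qNum q ((s-j)+1) from rfl]
  have h2 : qNum q ((s-j)+1) ≠ 0 := hq _ (Nat.succ_pos _)
  have hfj := qFact_ne hq j
  have hfsj := qFact_ne hq (s-j)
  have hfs := qFact_ne hq s
  field_simp

lemma pb_diff {K : Type*} [Field K] (q u x : K) (a : ℕ → K)
    (hq : ∀ n : ℕ, 0 < n → qNum q n ≠ 0) (s : ℕ) (c : K) :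
    Pb q u a (s+1) x c - Pb q u a (s+1) x (q*c) =
      (1 - q) * c * (qNum q (s+1) * Pb q u a s x (u*c)) := by
  unfold Pb
  rw [← Finset.sum_sub_distrib, Finset.sum_range_succ]
  simp only [Nat.sub_self, pow_zero, mul_one, sub_self, add_zero]
  have : ∀ j ∈ Finset.range (s+1),
      qBinom q (s+1) j * u ^ ((s+1-j).choose 2) *
        (∑ i ∈ Finset.range (j + 1), qBinom q j i * a i * x ^ (j - i)) * c ^ (s+1-j)
      - qBinom q (s+1) j * u ^ ((s+1-j).choose 2) *
        (∑ i ∈ Finset.range (j + 1), qBinom q j i * a i * x ^ (j - i)) * (q*c) ^ (s+1-j)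
      = (1 - q) * c * (qNum q (s+1) * (qBinom q s j * u ^ ((s - j).choose 2) *
        (∑ i ∈ Finset.range (j + 1), qBinom q j i * a i * x ^ (j - i)) * (u*c) ^ (s-j))) := by
    intro j hj
    have hj' : j ≤ s := by simpa [Nat.lt_succ_iff] using hj
    have h1 : s + 1 - j = (s - j) + 1 := by omega
    have hc2 : (s+1-j).choose 2 = (s-j).choose 2 + (s-j) := by
      rw [h1, Nat.choose_succ_succ]
      simp [Nat.choose_one_right]
      omega
    have hgeo : 1 - q ^ ((s-j)+1) = (1 - q) * qNum q ((s-j)+1) := one_sub_pow q _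
    have hbin := qBinom_identity hq s j hj'
    set S := ∑ i ∈ Finset.range (j + 1), qBinom q j i * a i * x ^ (j - i) with hS
    rw [hc2, h1]
    have key : qBinom q (s+1) j * (1 - q ^ ((s-j)+1)) =
        (1-q) * (qNum q (s+1) * qBinom q s j) := by
      rw [hgeo, ← hbin, h1]
      ring
    rw [mul_pow, mul_pow, pow_succ c (s-j), pow_add]
    linear_combination S * c^(s-j) * c * u^((s-j).choose 2) * u^(s-j) * key
  rw [Finset.sum_congr rfl this, ← Finset.mul_sum, ← Finset.mul_sum]

lemma iter_aux {K : Type*} [Field K] (q u x : K)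
    (hq : ∀ n : ℕ, 0 < n → qNum q n ≠ 0) (hq0 : q ≠ 0) (hq1 : q ≠ 1)
    (a : ℕ → K) (n : ℕ) :
    ∀ k, k ≤ n → ∀ t : K, t ≠ 0 →
      (Dq q)^[k] (fun s => Pb q u a n x s) t =
        qFact q n / qFact q (n - k) * u ^ (k.choose 2) * Pb q u a (n - k) x (u ^ k * t) := by
  have hfact := qFact_ne hq
  have h1q : (1 : K) - q ≠ 0 := sub_ne_zero.mpr (Ne.symm hq1)
  intro k
  induction k with
  | zero =>
      intro _ t ht
      simp [div_self (hfact n)]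
  | succ k ih =>
      intro hk t ht
      have hk' : k ≤ n := Nat.le_of_succ_le hk
      have hs : n - k = (n - (k+1)) + 1 := by omega
      set s := n - (k+1) with hsdef
      rw [Function.iterate_succ_apply']
      show ((Dq q)^[k] (fun s => Pb q u a n x s) t -
          (Dq q)^[k] (fun s => Pb q u a n x s) (q * t)) / ((1 - q) * t) = _
      rw [ih hk' t ht, ih hk' (q*t) (mul_ne_zero hq0 ht), hs]
      have hqy : u ^ k * (q * t) = q * (u ^ k * t) := by ring
      rw [hqy]
      have hdiff := pb_diff q u x a hq s (u ^ k * t)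
      have hF : qFact q n / qFact q (s+1) * qNum q (s+1) = qFact q n / qFact q s := by
        rw [show qFact q (s+1) = qFact q s * qNum q (s+1) from rfl]
        have := hq (s+1) (Nat.succ_pos s)
        field_simp
      have hch : (k+1).choose 2 = k.choose 2 + k := by
        rw [Nat.choose_succ_succ]
        simp [Nat.choose_one_right]
        omega
      have hcu : u ^ (k+1) * t = u * (u ^ k * t) := by ring
      rw [div_eq_iff (mul_ne_zero h1q ht), hch, pow_add, hcu]
      linear_combination (u ^ (k.choose 2) * hdiff) * (qFact q n / qFact q (s+1)) +
        ((1-q) * (u^k * t) * u^(k.choose 2) * Pb q u a s x (u * (u^k * t))) * hF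

/-- D_{q,y}^k P_n(x,y;u) = ([n]_q!/[n-k]_q!) u^{C(k,2)} P_{n-k}(x, u^k y; u) for 0 ≤ k ≤ n. -/
theorem deformed_bivariate_qAppell_iter_qderiv_y {K : Type*} [Field K] (q u x y : K)
    (hq : ∀ n : ℕ, 0 < n → qNum q n ≠ 0) (hq0 : q ≠ 0) (hq1 : q ≠ 1) (hy : y ≠ 0)
    (a : ℕ → K) (n k : ℕ) (hk : k ≤ n) :
    (Dq q)^[k] (fun t => Pb q u a n x t) y =
      qFact q n / qFact q (n - k) * u ^ (k.choose 2) * Pb q u a (n - k) x (u ^ k * y) := by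
  exact iter_aux q u x hq hq0 hq1 a n k hk y hy
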